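/- arXiv:0806.2403 — 3 statements merged into one kernel-verified Lean document; each statement's English description precedes it below -/
import Mathlib

section
/- Let h₆(x,y,ε) = y²/2 + (a/3)x³ − bεx with a ≠ 0, and let p ≥ 6 be an integer. For every quasi-homogeneous real polynomial h of order p+1 in (x,y,ε) there exist a quasi-homogeneous polynomial χ of order p and a quasi-homogeneous polynomial u of order p+1 depending only on (x,ε) (containing no y) such that h + {h₆, χ} = u, where {·,·} is the Poisson bracket. Moreover, if p is even one can choose χ so that u = 0. -/
open MvPolynomial

/-!
Write `L χ = {h₆, χ} = (a x² − b ε) χ_y − y χ_x`. For a monomial `c xⁱ yʲ εˡ` with `j ≥ 1`,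
`χ₀ = c/(i+1) · x^(i+1) y^(j-1) εˡ` has `−y ∂ₓχ₀` equal to minus the monomial, while
`(a x² − b ε) ∂_y χ₀` only has `y`-degree `j − 2`. Adding `L χ₀` therefore lowers the
`y`-degree by two, and induction on it leaves a `y`-free remainder, the whole construction
respecting quasi-homogeneity. Since `x` and `ε` have even weight, a `y`-free quasi-homogeneous
polynomial of odd order vanishes, so for even `p` the remainder is `0`.
-/

/-- Poisson bracket `{f,g} = f_x g_y − f_y g_x` of polynomials in `(x,y,ε)`
(variables `0, 1, 2` of `MvPolynomial (Fin 3) ℝ`). -/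
noncomputable def pbracket (f g : MvPolynomial (Fin 3) ℝ) : MvPolynomial (Fin 3) ℝ :=
  pderiv 0 f * pderiv 1 g - pderiv 1 f * pderiv 0 g

/-- Quasi-homogeneous weights: `x` has weight 2, `y` weight 3, `ε` weight 4. -/
def qhw : Fin 3 → ℕ := ![2, 3, 4]

noncomputable def hamiltonian₆ (a b : ℝ) : MvPolynomial (Fin 3) ℝ :=
  C ((1:ℝ)/2) * X 1 ^ 2 + C (a/3) * X 0 ^ 3 - C b * X 2 * X 0

noncomputable def pbracketₗ (f : MvPolynomial (Fin 3) ℝ) :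
    MvPolynomial (Fin 3) ℝ →ₗ[ℝ] MvPolynomial (Fin 3) ℝ :=
  LinearMap.mulLeft ℝ (pderiv 0 f) ∘ₗ (pderiv 1).toLinearMap -
    LinearMap.mulLeft ℝ (pderiv 1 f) ∘ₗ (pderiv 0).toLinearMap

lemma pbracketₗ_apply (f g : MvPolynomial (Fin 3) ℝ) : pbracketₗ f g = pbracket f g := rfl

noncomputable def yFree : Submodule ℝ (MvPolynomial (Fin 3) ℝ) := restrictSupport ℝ {m | m 1 = 0}

lemma weight_qhw (m : Fin 3 →₀ ℕ) : Finsupp.weight qhw m = 2 * m 0 + 3 * m 1 + 4 * m 2 := by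
  simp [Finsupp.weight_apply, Finsupp.sum_fintype, Fin.sum_univ_three, qhw, mul_comm]

lemma monomial_eq_C_mul_X_pow (m : Fin 3 →₀ ℕ) (c : ℝ) :
    monomial m c = C c * X 0 ^ m 0 * X 1 ^ m 1 * X 2 ^ m 2 := by
  rw [monomial_eq, Finsupp.prod_fintype _ _ (fun _ => pow_zero _), Fin.prod_univ_three]
  ring

lemma isWeightedHomogeneous_C_mul_X_pow (c : ℝ) {i j l n : ℕ} (h : 2 * i + 3 * j + 4 * l = n) :
    (C c * X 0 ^ i * X 1 ^ j * X 2 ^ l : MvPolynomial (Fin 3) ℝ).IsWeightedHomogeneous qhw n := by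
  subst h
  have hX (k : Fin 3) (n : ℕ) :=
    (isWeightedHomogeneous_X ℝ qhw k).pow n
  simpa [qhw, mul_comm] using
    ((((isWeightedHomogeneous_C qhw c).mul (hX 0 i)).mul (hX 1 j)).mul (hX 2 l))

lemma pderiv_zero_hamiltonian₆ (a b : ℝ) :
    pderiv 0 (hamiltonian₆ a b) = C a * X 0 ^ 2 - C b * X 2 := by
  simp [hamiltonian₆, pderiv_X, ← mul_assoc, ← map_ofNat C 3, ← C_mul]

lemma pderiv_one_hamiltonian₆ (a b : ℝ) : pderiv 1 (hamiltonian₆ a b) = X 1 := by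
  simp [hamiltonian₆, pderiv_X, ← mul_assoc, ← map_ofNat C 2, ← C_mul]

lemma pbracket_hamiltonian₆ (a b : ℝ) (χ : MvPolynomial (Fin 3) ℝ) :
    pbracket (hamiltonian₆ a b) χ
      = (C a * X 0 ^ 2 - C b * X 2) * pderiv 1 χ - X 1 * pderiv 0 χ := by
  rw [pbracket, pderiv_zero_hamiltonian₆, pderiv_one_hamiltonian₆]

lemma pbracket_hamiltonian₆_C_mul_X_pow_X_pow (a b c : ℝ) (i l : ℕ) :
    pbracket (hamiltonian₆ a b) (C c * X 0 ^ (i + 1) * X 2 ^ l)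
      = -(C (c * (i + 1)) * X 0 ^ i * X 1 * X 2 ^ l) := by
  rw [pbracket_hamiltonian₆]
  simp only [Derivation.leibniz, Derivation.leibniz_pow, pderiv_X, derivation_C, Pi.single_apply,
    Fin.reduceEq, ↓reduceIte, smul_eq_mul, nsmul_eq_mul, Nat.add_sub_cancel, C_mul, C_add, C_1,
    map_natCast, Nat.cast_add, Nat.cast_one]
  ring

lemma pbracket_hamiltonian₆_C_mul_X_pow (a b c : ℝ) (i k l : ℕ) :
    pbracket (hamiltonian₆ a b) (C c * X 0 ^ (i + 1) * X 1 ^ (k + 1) * X 2 ^ l)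
      = C (a * c * (k + 1)) * X 0 ^ (i + 3) * X 1 ^ k * X 2 ^ l
        - C (b * c * (k + 1)) * X 0 ^ (i + 1) * X 1 ^ k * X 2 ^ (l + 1)
        - C (c * (i + 1)) * X 0 ^ i * X 1 ^ (k + 2) * X 2 ^ l := by
  rw [pbracket_hamiltonian₆]
  simp only [Derivation.leibniz, Derivation.leibniz_pow, pderiv_X, derivation_C, Pi.single_apply,
    Fin.reduceEq, ↓reduceIte, smul_eq_mul, nsmul_eq_mul, Nat.add_sub_cancel, C_mul, C_add, C_1,
    map_natCast, Nat.cast_add, Nat.cast_one]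
  ring

lemma pderiv_one_eq_zero_of_mem_yFree {u : MvPolynomial (Fin 3) ℝ} (hu : u ∈ yFree) :
    pderiv 1 u = 0 := by
  refine pderiv_eq_zero_of_notMem_vars fun h1 => ?_
  obtain ⟨m, hm, h1m⟩ := (mem_vars_iff_mem_support 1).mp h1
  exact Finsupp.mem_support_iff.mp h1m (hu hm)

lemma eq_zero_of_mem_yFree_of_odd {u : MvPolynomial (Fin 3) ℝ} {n : ℕ} (hy : u ∈ yFree)
    (hu : u.IsWeightedHomogeneous qhw n) (hn : Odd n) : u = 0 := by
  ext d
  by_contra hd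
  have hw := hu hd
  have hd1 : d 1 = 0 := hy (mem_support_iff.mpr hd)
  rw [weight_qhw, hd1] at hw
  obtain ⟨k, rfl⟩ := hn
  omega

/-- `h` lies here iff `h + {h₆, χ}` is `y`-free of order `p + 1` for some `χ` of order `p`. -/
noncomputable def reducibleSubmodule (a b : ℝ) (p : ℕ) : Submodule ℝ (MvPolynomial (Fin 3) ℝ) :=
  weightedHomogeneousSubmodule ℝ qhw (p + 1) ⊓ yFree ⊔
    (weightedHomogeneousSubmodule ℝ qhw p).map (pbracketₗ (hamiltonian₆ a b))

lemma C_mul_X_pow_mem_yFree (c : ℝ) (i l : ℕ) :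
    (C c * X 0 ^ i * X 1 ^ 0 * X 2 ^ l : MvPolynomial (Fin 3) ℝ) ∈ yFree := by
  have : (C c * X 0 ^ i * X 1 ^ 0 * X 2 ^ l : MvPolynomial (Fin 3) ℝ)
      = monomial (Finsupp.single 0 i + Finsupp.single 2 l) c := by
    rw [monomial_eq_C_mul_X_pow]; simp
  rw [this]
  simp [yFree]

lemma pbracket_hamiltonian₆_mem_reducibleSubmodule (a b : ℝ) {p : ℕ}
    {χ : MvPolynomial (Fin 3) ℝ} (hχ : χ.IsWeightedHomogeneous qhw p) :
    pbracket (hamiltonian₆ a b) χ ∈ reducibleSubmodule a b p :=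
  Submodule.mem_sup_right ⟨χ, hχ, rfl⟩

lemma C_mul_X_pow_mem_reducibleSubmodule (a b : ℝ) (p j : ℕ) :
    ∀ (i l : ℕ) (c : ℝ), 2 * i + 3 * j + 4 * l = p + 1 →
      C c * X 0 ^ i * X 1 ^ j * X 2 ^ l ∈ reducibleSubmodule a b p := by
  induction j using Nat.strong_induction_on with
  | _ j ih =>
  intro i l c hw
  have hi : (i : ℝ) + 1 ≠ 0 := by positivity
  match j, ih, hw with
  | 0, _, hw =>
    exact Submodule.mem_sup_left
      ⟨isWeightedHomogeneous_C_mul_X_pow c hw, C_mul_X_pow_mem_yFree c i l⟩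
  | 1, _, hw =>
    have e := pbracket_hamiltonian₆_C_mul_X_pow_X_pow a b (c / (i + 1)) i l
    rw [div_mul_cancel₀ _ hi] at e
    have hχ := isWeightedHomogeneous_C_mul_X_pow (c / (i + 1)) (i := i + 1) (j := 0) (l := l)
      (n := p) (by omega)
    rw [pow_zero, mul_one] at hχ
    convert neg_mem (pbracket_hamiltonian₆_mem_reducibleSubmodule a b hχ) using 1
    rw [e, neg_neg, pow_one]
  | k + 2, ih, hw =>
    have e := pbracket_hamiltonian₆_C_mul_X_pow a b (c / (i + 1)) i k l
    rw [div_mul_cancel₀ _ hi] at e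
    have hχ := isWeightedHomogeneous_C_mul_X_pow (c / (i + 1)) (i := i + 1) (j := k + 1) (l := l)
      (n := p) (by omega)
    set c' := c / (i + 1)
    have hreduce : C c * X 0 ^ i * X 1 ^ (k + 2) * X 2 ^ l =
        C (a * c' * (k + 1)) * X 0 ^ (i + 3) * X 1 ^ k * X 2 ^ l
          - C (b * c' * (k + 1)) * X 0 ^ (i + 1) * X 1 ^ k * X 2 ^ (l + 1)
          - pbracket (hamiltonian₆ a b) (C c' * X 0 ^ (i + 1) * X 1 ^ (k + 1) * X 2 ^ l) := by
      rw [e]; ring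
    rw [hreduce]
    exact sub_mem (sub_mem (ih k (by omega) _ _ _ (by omega)) (ih k (by omega) _ _ _ (by omega)))
      (pbracket_hamiltonian₆_mem_reducibleSubmodule a b hχ)

theorem weightedHomogeneousSubmodule_le_reducibleSubmodule (a b : ℝ) (p : ℕ) :
    weightedHomogeneousSubmodule ℝ qhw (p + 1) ≤ reducibleSubmodule a b p := by
  intro h hh
  induction hh using IsWeightedHomogeneous.induction_on with
  | zero => exact zero_mem _
  | add _ _ _ _ hf hg => exact add_mem hf hg
  | monomial m c hm =>
    rw [weight_qhw] at hm
    rw [monomial_eq_C_mul_X_pow]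
    exact C_mul_X_pow_mem_reducibleSubmodule a b p (m 1) (m 0) (m 2) c hm

theorem stmt_5_general (a b : ℝ) (p : ℕ)
    (h₆ : MvPolynomial (Fin 3) ℝ)
    (hh₆ : h₆ = C ((1:ℝ)/2) * X 1 ^ 2 + C (a/3) * X 0 ^ 3 - C b * X 2 * X 0)
    (h : MvPolynomial (Fin 3) ℝ)
    (hh : h.IsWeightedHomogeneous qhw (p + 1)) :
    (∃ χ u : MvPolynomial (Fin 3) ℝ,
      χ.IsWeightedHomogeneous qhw p ∧ u.IsWeightedHomogeneous qhw (p + 1) ∧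
      pderiv 1 u = 0 ∧ h + pbracket h₆ χ = u) ∧
    (Even p → ∃ χ : MvPolynomial (Fin 3) ℝ,
      χ.IsWeightedHomogeneous qhw p ∧ h + pbracket h₆ χ = 0) := by
  obtain rfl : h₆ = hamiltonian₆ a b := hh₆
  obtain ⟨u, ⟨hu, hy⟩, _, ⟨χ, hχ, rfl⟩, hsum⟩ :=
    Submodule.mem_sup.mp (weightedHomogeneousSubmodule_le_reducibleSubmodule a b p hh)
  have hχ' : (-χ).IsWeightedHomogeneous qhw p := hχ.neg
  have hnormal : h + pbracket (hamiltonian₆ a b) (-χ) = u := by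
    rw [← hsum, ← pbracketₗ_apply, map_neg]; abel
  refine ⟨⟨-χ, u, hχ', hu, pderiv_one_eq_zero_of_mem_yFree hy, hnormal⟩, fun hp => ⟨-χ, hχ', ?_⟩⟩
  rw [hnormal, eq_zero_of_mem_yFree_of_odd hy hu hp.add_one]

/-- Normal-form homological step: for `h₆ = y²/2 + (a/3)x³ − bεx` with `a ≠ 0` and any
quasi-homogeneous polynomial `h` of order `p+1` (`p ≥ 6`) there are quasi-homogeneous `χ`
of order `p` and `u` of order `p+1` free of `y` with `h + {h₆,χ} = u`; for even `p` one
can achieve `u = 0`. -/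
theorem stmt_5 (a b : ℝ) (ha : a ≠ 0) (p : ℕ) (hp : 6 ≤ p)
    (h₆ : MvPolynomial (Fin 3) ℝ)
    (hh₆ : h₆ = C ((1:ℝ)/2) * X 1 ^ 2 + C (a/3) * X 0 ^ 3 - C b * X 2 * X 0)
    (h : MvPolynomial (Fin 3) ℝ)
    (hh : h.IsWeightedHomogeneous qhw (p + 1)) :
    (∃ χ u : MvPolynomial (Fin 3) ℝ,
      χ.IsWeightedHomogeneous qhw p ∧ u.IsWeightedHomogeneous qhw (p + 1) ∧
      pderiv 1 u = 0 ∧ h + pbracket h₆ χ = u) ∧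
    (Even p → ∃ χ : MvPolynomial (Fin 3) ℝ,
      χ.IsWeightedHomogeneous qhw p ∧ h + pbracket h₆ χ = 0) :=
  stmt_5_general a b p h₆ hh₆ h hh
end

section
/- Let U ⊆ ℝ² be open and let F, F̃ : (−δ₀,δ₀) × U → ℝ² be analytic families of the close-to-identity form F_δ = id + δG_δ and F̃_δ = id + δG̃_δ, each area-preserving: det D_zF_δ ≡ 1 and det D_zF̃_δ ≡ 1 on U for all δ. Suppose the Taylor coefficients in δ at δ = 0 agree up to order n: ∂_δ^ℓ F(0,z) = ∂_δ^ℓ F̃(0,z) for all z ∈ U and all 0 ≤ ℓ ≤ n. Then the planar vector field v(z) := ∂_δ^{n+1}(F − F̃)(0,z) is divergence-free: ∂v₁/∂x + ∂v₂/∂y = 0 on U. -/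
/-- Determinant of a linear map of the plane. -/
noncomputable def det2 (L : (ℝ × ℝ) →L[ℝ] ℝ × ℝ) : ℝ :=
  (L (1, 0)).1 * (L (0, 1)).2 - (L (1, 0)).2 * (L (0, 1)).1

/-!
Let `A i` and `B i` be the spatial Jacobians at `z` of the `i`-th `δ`-coefficients of `F` and `F'`.
Since mixed partial derivatives commute, `A i` is also the `i`-th `δ`-derivative of `δ ↦ D_z F_δ`
at `0`, so differentiating `det D_z F_δ ≡ 1` `n + 1` times and expanding by Leibniz gives
`∑ i, (n + 1).choose i * mixedDet2 (A i) (A (n + 1 - i)) = 0`, and likewise for `B`. As `A i = B i`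
for `i ≤ n` and `A 0 = id`, only the terms `i = 0` and `i = n + 1` survive in the difference of
the two identities, and they add up to the trace of `A (n + 1) - B (n + 1) = D v z`.
-/

open Filter Topology Finset
open scoped ContDiff

theorem ContinuousLinearMap.iteratedDeriv_comp_left {𝕜 F G : Type*} [NontriviallyNormedField 𝕜]
    [NormedAddCommGroup F] [NormedSpace 𝕜 F] [NormedAddCommGroup G] [NormedSpace 𝕜 G]
    (L : F →L[𝕜] G) {f : 𝕜 → F} {x : 𝕜} {n : ℕ∞ω} (hf : ContDiffAt 𝕜 n f x) {i : ℕ}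
    (hi : i ≤ n) : iteratedDeriv i (L ∘ f) x = L (iteratedDeriv i f x) := by
  simp only [iteratedDeriv_eq_iteratedFDeriv, L.iteratedFDeriv_comp_left hf hi]
  rfl

section PartialDerivatives

variable {E W : Type*} [NormedAddCommGroup E] [NormedSpace ℝ E]
  [NormedAddCommGroup W] [NormedSpace ℝ W]

theorem deriv_eq_fderiv_uncurry_apply {G : ℝ → E → W} {t : ℝ} {z : E}
    (h : DifferentiableAt ℝ (fun q : ℝ × E => G q.1 q.2) (t, z)) :
    deriv (fun s => G s z) t = fderiv ℝ (fun q : ℝ × E => G q.1 q.2) (t, z) (1, 0) :=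
  HasDerivAt.deriv <|
    h.hasFDerivAt.comp_hasDerivAt (f := fun s => (s, z)) t
      ((hasDerivAt_id t).prodMk (hasDerivAt_const t z))

theorem fderiv_eq_fderiv_uncurry_comp_inr {G : ℝ → E → W} {t : ℝ} {z : E}
    (h : DifferentiableAt ℝ (fun q : ℝ × E => G q.1 q.2) (t, z)) :
    fderiv ℝ (G t) z =
      (fderiv ℝ (fun q : ℝ × E => G q.1 q.2) (t, z)).comp (ContinuousLinearMap.inr ℝ ℝ E) :=
  (h.hasFDerivAt.comp z (hasFDerivAt_prodMk_right t z)).fderiv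

theorem ContDiffOn.contDiffAt_slice {S : Set (ℝ × E)} (hS : IsOpen S) {Φ : ℝ × E → W}
    {n : ℕ∞ω} (hΦ : ContDiffOn ℝ n Φ S) {t : ℝ} {z : E} (hq : (t, z) ∈ S) :
    ContDiffAt ℝ n (fun s => Φ (s, z)) t :=
  (hΦ.contDiffAt (hS.mem_nhds hq)).comp t (contDiffAt_id.prodMk contDiffAt_const)

theorem fderiv_deriv_comm {G : ℝ → E → W} {t : ℝ} {z : E}
    (hG : ContDiffAt ℝ 2 (fun q : ℝ × E => G q.1 q.2) (t, z)) :
    fderiv ℝ (fun w => deriv (fun s => G s w) t) z = deriv (fun s => fderiv ℝ (G s) z) t := by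
  set Φ : ℝ × E → W := fun q => G q.1 q.2
  have hdiff : ∀ᶠ q in 𝓝 (t, z), DifferentiableAt ℝ Φ q :=
    (hG.eventually (by simp)).mono fun q hq => hq.differentiableAt (by simp)
  have hD2 : DifferentiableAt ℝ (fderiv ℝ Φ) (t, z) :=
    (hG.fderiv_right (m := 1) le_rfl).differentiableAt one_ne_zero
  have hL : (fun w => deriv (fun s => G s w) t) =ᶠ[𝓝 z] fun w => fderiv ℝ Φ (t, w) (1, 0) :=
    (((continuous_const.prodMk continuous_id).tendsto z).eventually hdiff).mono
      fun w hw => deriv_eq_fderiv_uncurry_apply hw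
  have hR : (fun s => fderiv ℝ (G s) z) =ᶠ[𝓝 t]
      fun s => (fderiv ℝ Φ (s, z)).comp (ContinuousLinearMap.inr ℝ ℝ E) :=
    (((continuous_id.prodMk continuous_const).tendsto t).eventually hdiff).mono
      fun s hs => fderiv_eq_fderiv_uncurry_comp_inr hs
  rw [hL.fderiv_eq, hR.deriv_eq]
  have hL' : HasFDerivAt (fun w => fderiv ℝ Φ (t, w) (1, 0))
      (((fderiv ℝ (fderiv ℝ Φ) (t, z)).comp (ContinuousLinearMap.inr ℝ ℝ E)).flip
        ((1, 0) : ℝ × E)) z := by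
    simpa using (hD2.hasFDerivAt.comp z (hasFDerivAt_prodMk_right t z)).clm_apply
      (hasFDerivAt_const ((1, 0) : ℝ × E) z)
  have hR' : HasDerivAt (fun s => (fderiv ℝ Φ (s, z)).comp (ContinuousLinearMap.inr ℝ ℝ E))
      ((fderiv ℝ (fderiv ℝ Φ) (t, z) (1, 0)).comp (ContinuousLinearMap.inr ℝ ℝ E)) t := by
    simpa using (hD2.hasFDerivAt.comp_hasDerivAt (f := fun s => (s, z)) t
      ((hasDerivAt_id t).prodMk (hasDerivAt_const t z))).clm_comp
      (hasDerivAt_const t (ContinuousLinearMap.inr ℝ ℝ E))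
  rw [hL'.fderiv, hR'.deriv]
  ext u
  exact hG.isSymmSndFDerivAt (by simp) (0, u) (1, 0)

variable {S : Set (ℝ × E)} {F : ℝ → E → W}

theorem contDiffOn_iteratedDeriv_fst (hS : IsOpen S)
    (hF : ContDiffOn ℝ ∞ (fun q : ℝ × E => F q.1 q.2) S) (k : ℕ) :
    ContDiffOn ℝ ∞ (fun q : ℝ × E => iteratedDeriv k (fun s => F s q.2) q.1) S := by
  induction k with
  | zero => simpa using hF
  | succ k ih =>
    refine ((ih.fderiv_of_isOpen hS (by simp)).clm_apply
      (contDiffOn_const (c := ((1, 0) : ℝ × E)))).congr fun ⟨t, w⟩ hq => ?_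
    rw [iteratedDeriv_succ]
    exact deriv_eq_fderiv_uncurry_apply (G := fun s w => iteratedDeriv k (fun s' => F s' w) s)
      ((ih.contDiffAt (hS.mem_nhds hq)).differentiableAt (by simp))

theorem contDiffOn_fderiv_snd (hS : IsOpen S)
    (hF : ContDiffOn ℝ ∞ (fun q : ℝ × E => F q.1 q.2) S) :
    ContDiffOn ℝ ∞ (fun q : ℝ × E => fderiv ℝ (F q.1) q.2) S :=
  ((hF.fderiv_of_isOpen hS (by simp)).clm_comp contDiffOn_const).congr fun q hq =>
    fderiv_eq_fderiv_uncurry_comp_inr ((hF.contDiffAt (hS.mem_nhds hq)).differentiableAt (by simp))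

theorem differentiableAt_iteratedDeriv_fst (hS : IsOpen S)
    (hF : ContDiffOn ℝ ∞ (fun q : ℝ × E => F q.1 q.2) S) (k : ℕ) {t : ℝ} {z : E}
    (hq : (t, z) ∈ S) : DifferentiableAt ℝ (fun w => iteratedDeriv k (fun s => F s w) t) z :=
  (((contDiffOn_iteratedDeriv_fst hS hF k).contDiffAt (hS.mem_nhds hq)).differentiableAt
    (by simp)).comp z (hasFDerivAt_prodMk_right t z).differentiableAt

theorem fderiv_iteratedDeriv_comm (hS : IsOpen S)
    (hF : ContDiffOn ℝ ∞ (fun q : ℝ × E => F q.1 q.2) S) (k : ℕ) {t : ℝ} {z : E}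
    (hq : (t, z) ∈ S) :
    fderiv ℝ (fun w => iteratedDeriv k (fun s => F s w) t) z =
      iteratedDeriv k (fun s => fderiv ℝ (F s) z) t := by
  induction k generalizing t with
  | zero => simp
  | succ k ih =>
    have hslice : ∀ᶠ s in 𝓝 t, (s, z) ∈ S :=
      (continuous_id.prodMk continuous_const).continuousAt.preimage_mem_nhds (hS.mem_nhds hq)
    simp only [iteratedDeriv_succ]
    rw [fderiv_deriv_comm (G := fun s w => iteratedDeriv k (fun s' => F s' w) s)
      (((contDiffOn_iteratedDeriv_fst hS hF k).contDiffAt (hS.mem_nhds hq)).of_le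
      (WithTop.coe_le_coe.mpr le_top))]
    exact Filter.EventuallyEq.deriv_eq (hslice.mono fun s hs => ih hs)

theorem hasFDerivAt_iteratedDeriv_sub (hS : IsOpen S) {F' : ℝ → E → W}
    (hF : ContDiffOn ℝ ∞ (fun q : ℝ × E => F q.1 q.2) S)
    (hF' : ContDiffOn ℝ ∞ (fun q : ℝ × E => F' q.1 q.2) S) (k : ℕ) {t : ℝ} {z : E}
    (hq : (t, z) ∈ S) :
    HasFDerivAt (fun w => iteratedDeriv k (fun s => F s w - F' s w) t)
      (fderiv ℝ (fun w => iteratedDeriv k (fun s => F s w) t) z -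
        fderiv ℝ (fun w => iteratedDeriv k (fun s => F' s w) t) z) z := by
  have hslice : ∀ᶠ w in 𝓝 z, (t, w) ∈ S :=
    (continuous_const.prodMk continuous_id).continuousAt.preimage_mem_nhds (hS.mem_nhds hq)
  refine ((differentiableAt_iteratedDeriv_fst hS hF k hq).hasFDerivAt.sub
    (differentiableAt_iteratedDeriv_fst hS hF' k hq).hasFDerivAt).congr_of_eventuallyEq
    (hslice.mono fun w hw => iteratedDeriv_fun_sub ?_ ?_)
  · exact (hF.contDiffAt_slice hS hw).of_le (WithTop.coe_le_coe.mpr le_top)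
  · exact (hF'.contDiffAt_slice hS hw).of_le (WithTop.coe_le_coe.mpr le_top)

end PartialDerivatives

noncomputable def mixedDet2 (A B : (ℝ × ℝ) →L[ℝ] ℝ × ℝ) : ℝ :=
  (A (1, 0)).1 * (B (0, 1)).2 - (A (1, 0)).2 * (B (0, 1)).1

theorem iteratedDeriv_det2 {M : ℝ → (ℝ × ℝ) →L[ℝ] ℝ × ℝ} {t : ℝ} {k : ℕ}
    (hM : ContDiffAt ℝ k M t) :
    iteratedDeriv k (fun s => det2 (M s)) t = ∑ i ∈ range (k + 1),
      (k.choose i : ℝ) * mixedDet2 (iteratedDeriv i M t) (iteratedDeriv (k - i) M t) := by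
  let entry (π : (ℝ × ℝ) →L[ℝ] ℝ) (u : ℝ × ℝ) : ((ℝ × ℝ) →L[ℝ] ℝ × ℝ) →L[ℝ] ℝ :=
    π.comp (ContinuousLinearMap.apply ℝ (ℝ × ℝ) u)
  have hentry (π : (ℝ × ℝ) →L[ℝ] ℝ) (u : ℝ × ℝ) {i : ℕ} (hi : i ≤ k) :
      iteratedDeriv i (fun s => π (M s u)) t = π (iteratedDeriv i M t u) :=
    (entry π u).iteratedDeriv_comp_left hM (by exact_mod_cast hi)
  have hsmooth (π : (ℝ × ℝ) →L[ℝ] ℝ) (u : ℝ × ℝ) : ContDiffAt ℝ k (fun s => π (M s u)) t :=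
    (entry π u).contDiff.contDiffAt.comp t hM
  set π₁ := ContinuousLinearMap.fst ℝ ℝ ℝ
  set π₂ := ContinuousLinearMap.snd ℝ ℝ ℝ
  change iteratedDeriv k (fun s => π₁ (M s (1, 0)) * π₂ (M s (0, 1))
    - π₂ (M s (1, 0)) * π₁ (M s (0, 1))) t = _
  rw [iteratedDeriv_fun_sub ((hsmooth _ _).mul (hsmooth _ _)) ((hsmooth _ _).mul (hsmooth _ _)),
    iteratedDeriv_fun_mul (hsmooth _ _) (hsmooth _ _),
    iteratedDeriv_fun_mul (hsmooth _ _) (hsmooth _ _), ← sum_sub_distrib]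
  refine sum_congr rfl fun i hi => ?_
  have hi : i ≤ k := Nat.lt_succ_iff.mp (mem_range.mp hi)
  rw [hentry _ _ hi, hentry _ _ hi, hentry _ _ (k.sub_le i), hentry _ _ (k.sub_le i), mixedDet2]
  simp only [π₁, π₂, ContinuousLinearMap.coe_fst', ContinuousLinearMap.coe_snd']
  ring

theorem sum_choose_mixedDet2_eq_zero {M : ℝ → (ℝ × ℝ) →L[ℝ] ℝ × ℝ} {t : ℝ} {k : ℕ}
    (hk : k ≠ 0) (hM : ContDiffAt ℝ k M t) (hdet : ∀ᶠ s in 𝓝 t, det2 (M s) = 1) :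
    ∑ i ∈ range (k + 1),
      (k.choose i : ℝ) * mixedDet2 (iteratedDeriv i M t) (iteratedDeriv (k - i) M t) = 0 := by
  rw [← iteratedDeriv_det2 hM, Filter.EventuallyEq.iteratedDeriv_eq k hdet, iteratedDeriv_const,
    if_neg hk]

theorem sum_choose_mixedDet2_sub_eq_trace {A B : ℕ → (ℝ × ℝ) →L[ℝ] ℝ × ℝ} {n : ℕ}
    (hAB : ∀ i ≤ n, A i = B i) (hA0 : A 0 = ContinuousLinearMap.id ℝ (ℝ × ℝ)) :
    ∑ i ∈ range (n + 1 + 1), ((n + 1).choose i : ℝ) * mixedDet2 (A i) (A (n + 1 - i)) -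
      ∑ i ∈ range (n + 1 + 1), ((n + 1).choose i : ℝ) * mixedDet2 (B i) (B (n + 1 - i)) =
      ((A (n + 1) - B (n + 1)) (1, 0)).1 + ((A (n + 1) - B (n + 1)) (0, 1)).2 := by
  have hB0 : B 0 = ContinuousLinearMap.id ℝ (ℝ × ℝ) := (hAB 0 n.zero_le).symm.trans hA0
  have hmid : ∀ i ∈ range n, mixedDet2 (A (i + 1)) (A (n + 1 - (i + 1))) =
      mixedDet2 (B (i + 1)) (B (n + 1 - (i + 1))) := fun i hi => by
    have hi : i < n := mem_range.mp hi
    rw [hAB (i + 1) hi, hAB (n + 1 - (i + 1)) (by omega)]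
  rw [← sum_sub_distrib, sum_range_succ, sum_range_succ', sum_eq_zero fun i hi => by rw [hmid i hi, sub_self]]
  simp only [mixedDet2, hA0, hB0, Nat.choose_zero_right, Nat.choose_self, Nat.cast_one,
    ContinuousLinearMap.id_apply, sub_apply, Prod.fst_sub, Prod.snd_sub,
    tsub_zero, tsub_self, one_mul, mul_one, zero_mul, mul_zero, zero_add]
  ring

theorem sum_choose_mixedDet2_fderiv_iteratedDeriv_eq_zero {S : Set (ℝ × (ℝ × ℝ))} (hS : IsOpen S)
    {F : ℝ → ℝ × ℝ → ℝ × ℝ} (hF : ContDiffOn ℝ ∞ (fun q : ℝ × (ℝ × ℝ) => F q.1 q.2) S)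
    (harea : ∀ q ∈ S, det2 (fderiv ℝ (F q.1) q.2) = 1) {t : ℝ} {z : ℝ × ℝ} (hq : (t, z) ∈ S)
    {k : ℕ} (hk : k ≠ 0) :
    ∑ i ∈ range (k + 1), (k.choose i : ℝ) *
      mixedDet2 (fderiv ℝ (fun w => iteratedDeriv i (fun s => F s w) t) z)
        (fderiv ℝ (fun w => iteratedDeriv (k - i) (fun s => F s w) t) z) = 0 := by
  have hslice : ∀ᶠ s in 𝓝 t, (s, z) ∈ S :=
    (continuous_id.prodMk continuous_const).continuousAt.preimage_mem_nhds (hS.mem_nhds hq)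
  simp only [fderiv_iteratedDeriv_comm hS hF _ hq]
  exact sum_choose_mixedDet2_eq_zero hk
    (((contDiffOn_fderiv_snd hS hF).contDiffAt_slice hS hq).of_le (WithTop.coe_le_coe.mpr le_top))
    (hslice.mono fun s hs => harea _ hs)

theorem stmt_12_general (U : Set (ℝ × ℝ)) (hU : IsOpen U) (δ₀ : ℝ) (hδ₀ : 0 < δ₀)
    (F F' : ℝ → ℝ × ℝ → ℝ × ℝ)
    (hanalF : AnalyticOnNhd ℝ (fun q : ℝ × (ℝ × ℝ) => F q.1 q.2)
      {q : ℝ × (ℝ × ℝ) | |q.1| < δ₀ ∧ q.2 ∈ U})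
    (hanalF' : AnalyticOnNhd ℝ (fun q : ℝ × (ℝ × ℝ) => F' q.1 q.2)
      {q : ℝ × (ℝ × ℝ) | |q.1| < δ₀ ∧ q.2 ∈ U})
    (hidF : ∀ z ∈ U, F 0 z = z)
    (hareaF : ∀ δ : ℝ, |δ| < δ₀ → ∀ z ∈ U, det2 (fderiv ℝ (F δ) z) = 1)
    (hareaF' : ∀ δ : ℝ, |δ| < δ₀ → ∀ z ∈ U, det2 (fderiv ℝ (F' δ) z) = 1)
    (n : ℕ)
    (hagree : ∀ ℓ : ℕ, ℓ ≤ n → ∀ z ∈ U,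
      iteratedDeriv ℓ (fun δ => F δ z) 0 = iteratedDeriv ℓ (fun δ => F' δ z) 0)
    (v : ℝ × ℝ → ℝ × ℝ)
    (hv : ∀ z, v z = iteratedDeriv (n + 1) (fun δ => F δ z - F' δ z) 0) :
    ∀ z ∈ U,
      fderiv ℝ (fun w => (v w).1) z (1, 0) + fderiv ℝ (fun w => (v w).2) z (0, 1) = 0 := by
  intro z hz
  set S : Set (ℝ × (ℝ × ℝ)) := {q | |q.1| < δ₀ ∧ q.2 ∈ U}
  have hS : IsOpen S := (isOpen_lt (continuous_abs.comp continuous_fst) continuous_const).inter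
    (hU.preimage continuous_snd)
  have hzS : ((0 : ℝ), z) ∈ S := ⟨by simpa using hδ₀, hz⟩
  have hFS : ContDiffOn ℝ ∞ _ S := hanalF.contDiffOn_of_completeSpace
  have hF'S : ContDiffOn ℝ ∞ _ S := hanalF'.contDiffOn_of_completeSpace
  set A : ℕ → (ℝ × ℝ) →L[ℝ] ℝ × ℝ := fun i =>
    fderiv ℝ (fun w => iteratedDeriv i (fun δ => F δ w) 0) z
  set B : ℕ → (ℝ × ℝ) →L[ℝ] ℝ × ℝ := fun i =>
    fderiv ℝ (fun w => iteratedDeriv i (fun δ => F' δ w) 0) z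
  have hAB : ∀ i ≤ n, A i = B i := fun i hi =>
    (eventuallyEq_of_mem (hU.mem_nhds hz) (hagree i hi)).fderiv_eq
  have hA0 : A 0 = ContinuousLinearMap.id ℝ (ℝ × ℝ) := by
    simp only [A, iteratedDeriv_zero]
    exact (eventuallyEq_of_mem (hU.mem_nhds hz) hidF).fderiv_eq.trans fderiv_id
  obtain rfl : v = _ := funext hv
  have hDv := hasFDerivAt_iteratedDeriv_sub hS hFS hF'S (n + 1) hzS
  have htrace := sum_choose_mixedDet2_sub_eq_trace hAB hA0
  rw [sum_choose_mixedDet2_fderiv_iteratedDeriv_eq_zero hS hFS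
      (fun q hq => hareaF q.1 hq.1 q.2 hq.2) hzS n.succ_ne_zero,
    sum_choose_mixedDet2_fderiv_iteratedDeriv_eq_zero hS hF'S
      (fun q hq => hareaF' q.1 hq.1 q.2 hq.2) hzS n.succ_ne_zero, sub_zero] at htrace
  rw [fderiv.fst hDv.differentiableAt, fderiv.snd hDv.differentiableAt, hDv.fderiv]
  exact htrace.symm

/-- If two close-to-identity analytic families of area-preserving planar maps have
Taylor expansions in `δ` that agree up to order `n`, then the coefficient of order
`n+1` of their difference is a divergence-free vector field. -/
theorem stmt_12 (U : Set (ℝ × ℝ)) (hU : IsOpen U) (δ₀ : ℝ) (hδ₀ : 0 < δ₀)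
    (F F' : ℝ → ℝ × ℝ → ℝ × ℝ)
    (hanalF : AnalyticOnNhd ℝ (fun q : ℝ × (ℝ × ℝ) => F q.1 q.2)
      {q : ℝ × (ℝ × ℝ) | |q.1| < δ₀ ∧ q.2 ∈ U})
    (hanalF' : AnalyticOnNhd ℝ (fun q : ℝ × (ℝ × ℝ) => F' q.1 q.2)
      {q : ℝ × (ℝ × ℝ) | |q.1| < δ₀ ∧ q.2 ∈ U})
    (hidF : ∀ z ∈ U, F 0 z = z) (hidF' : ∀ z ∈ U, F' 0 z = z)
    (hareaF : ∀ δ : ℝ, |δ| < δ₀ → ∀ z ∈ U, det2 (fderiv ℝ (F δ) z) = 1)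
    (hareaF' : ∀ δ : ℝ, |δ| < δ₀ → ∀ z ∈ U, det2 (fderiv ℝ (F' δ) z) = 1)
    (n : ℕ)
    (hagree : ∀ ℓ : ℕ, ℓ ≤ n → ∀ z ∈ U,
      iteratedDeriv ℓ (fun δ => F δ z) 0 = iteratedDeriv ℓ (fun δ => F' δ z) 0)
    (v : ℝ × ℝ → ℝ × ℝ)
    (hv : ∀ z, v z = iteratedDeriv (n + 1) (fun δ => F δ z - F' δ z) 0) :
    ∀ z ∈ U,
      fderiv ℝ (fun w => (v w).1) z (1, 0) + fderiv ℝ (fun w => (v w).2) z (0, 1) = 0 :=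
  stmt_12_general U hU δ₀ hδ₀ F F' hanalF hanalF' hidF hareaF hareaF' n hagree v hv
end

section
/- (The homoclinic invariant as the derivative of the splitting function.) Let λ > 1, U ⊆ ℝ² open, E : U → ℝ continuously differentiable, and let ψ⁻, ψ⁺ : ℝ → U be differentiable curves such that for all t: E(ψ⁻(t)) = 0, ∂E/∂x(ψ⁻(t)) = −(log λ)·(dψ⁻₂/dt)(t), and ∂E/∂y(ψ⁻(t)) = (log λ)·(dψ⁻₁/dt)(t). Define Θ(T) := E(ψ⁺(T·log λ)). Suppose t₁, t₂ ∈ ℝ satisfy ψ⁺(t₁) = ψ⁻(t₂), and set T₁ := t₁/log λ. Then Θ′(T₁) = (log λ)²·( ψ̇⁻₁(t₂)·ψ̇⁺₂(t₁) − ψ̇⁻₂(t₂)·ψ̇⁺₁(t₁) ); that is, the homoclinic invariant ω := Ω(ψ̇⁺(t₁), ψ̇⁻(t₂)) (where Ω(u,v) := u₁v₂ − u₂v₁ is the standard area form) satisfies ω = −Θ′(T₁)/(log λ)², so up to sign the homoclinic invariant equals (log λ)^{−2} times the derivative of the splitting function at its zero. -/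
/-!
The gradient conditions say that `DE` at a point `ψ⁻(t)` of the unstable separatrix is
`v ↦ log λ · Ω(ψ̇⁻(t), v)`, with `Ω` the standard area form. At the homoclinic point
`ψ⁺(t₁) = ψ⁻(t₂)` the chain rule gives `Θ′(T₁) = log λ · DE(ψ⁺(t₁)) ψ̇⁺(t₁)`, hence
`Θ′(T₁) = (log λ)² · Ω(ψ̇⁻(t₂), ψ̇⁺(t₁)) = -(log λ)² · Ω(ψ̇⁺(t₁), ψ̇⁻(t₂))`.
-/

def areaForm (u v : ℝ × ℝ) : ℝ := u.1 * v.2 - u.2 * v.1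

lemma areaForm_swap (u v : ℝ × ℝ) : areaForm v u = -areaForm u v := by
  unfold areaForm; ring

lemma map_prod_eq_smul_add_smul {R M F : Type*} [Semiring R] [AddCommMonoid M] [Module R M]
    [FunLike F (R × R) M] [LinearMapClass F R (R × R) M] (f : F) (v : R × R) :
    f v = v.1 • f (1, 0) + v.2 • f (0, 1) := by
  rw [← map_smul, ← map_smul, ← map_add]
  congr 1
  ext <;> simp

lemma apply_eq_smul_areaForm {f : ℝ × ℝ →L[ℝ] ℝ} {c : ℝ} {w : ℝ × ℝ}
    (h₁ : f (1, 0) = -c * w.2) (h₂ : f (0, 1) = c * w.1) (v : ℝ × ℝ) :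
    f v = c * areaForm w v := by
  rw [map_prod_eq_smul_add_smul, h₁, h₂, areaForm, smul_eq_mul, smul_eq_mul]
  ring

lemma deriv_fst_comp {ψ : ℝ → ℝ × ℝ} {t : ℝ} (hψ : DifferentiableAt ℝ ψ t) :
    deriv (fun s => (ψ s).1) t = (deriv ψ t).1 := by
  change deriv (Prod.fst ∘ ψ) t = _
  rw [fderiv_comp_deriv _ differentiableAt_fst hψ, fderiv_fst]
  rfl

lemma deriv_snd_comp {ψ : ℝ → ℝ × ℝ} {t : ℝ} (hψ : DifferentiableAt ℝ ψ t) :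
    deriv (fun s => (ψ s).2) t = (deriv ψ t).2 := by
  change deriv (Prod.snd ∘ ψ) t = _
  rw [fderiv_comp_deriv _ differentiableAt_snd hψ, fderiv_snd]
  rfl

lemma deriv_comp_comp_mul_const {F : Type*} [NormedAddCommGroup F] [NormedSpace ℝ F]
    {E : F → ℝ} {ψ : ℝ → F} {c x : ℝ}
    (hE : DifferentiableAt ℝ E (ψ (c * x))) (hψ : DifferentiableAt ℝ ψ (c * x)) :
    deriv (fun T => E (ψ (T * c))) x = c * fderiv ℝ E (ψ (c * x)) (deriv ψ (c * x)) := by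
  simp only [mul_comm _ c]
  rw [deriv_comp_mul_left c (fun t => E (ψ t)) x, smul_eq_mul]
  exact congrArg (c * ·) (fderiv_comp_deriv _ hE hψ)

theorem stmt_17_general (lam : ℝ) (hlam : 1 < lam) (U : Set (ℝ × ℝ)) (hU : IsOpen U)
    (E : ℝ × ℝ → ℝ) (hE : ContDiffOn ℝ 1 E U)
    (ψm ψp : ℝ → ℝ × ℝ)
    (hψmU : ∀ t, ψm t ∈ U)
    (hψp : ∀ t, DifferentiableAt ℝ ψp t)
    (hEx : ∀ t, fderiv ℝ E (ψm t) (1, 0) =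
      -(Real.log lam) * deriv (fun s => (ψm s).2) t)
    (hEy : ∀ t, fderiv ℝ E (ψm t) (0, 1) =
      Real.log lam * deriv (fun s => (ψm s).1) t)
    (t₁ t₂ : ℝ) (hhom : ψp t₁ = ψm t₂) :
    deriv (fun T => E (ψp (T * Real.log lam))) (t₁ / Real.log lam) =
      Real.log lam ^ 2 *
        (deriv (fun s => (ψm s).1) t₂ * deriv (fun s => (ψp s).2) t₁ -
         deriv (fun s => (ψm s).2) t₂ * deriv (fun s => (ψp s).1) t₁) ∧
    deriv (fun s => (ψp s).1) t₁ * deriv (fun s => (ψm s).2) t₂ -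
      deriv (fun s => (ψp s).2) t₁ * deriv (fun s => (ψm s).1) t₂ =
      -(deriv (fun T => E (ψp (T * Real.log lam))) (t₁ / Real.log lam)) /
        Real.log lam ^ 2 := by
  set L := Real.log lam
  have hL : L ≠ 0 := (Real.log_pos hlam).ne'
  set w : ℝ × ℝ := (deriv (fun s => (ψm s).1) t₂, deriv (fun s => (ψm s).2) t₂)
  set v := deriv ψp t₁
  have hEdiff : DifferentiableAt ℝ E (ψm t₂) :=
    (hE.contDiffAt (hU.mem_nhds (hψmU t₂))).differentiableAt one_ne_zero
  have hΘ : deriv (fun T => E (ψp (T * L))) (t₁ / L) = L ^ 2 * areaForm w v := by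
    have ht₁ : L * (t₁ / L) = t₁ := mul_div_cancel₀ t₁ hL
    rw [deriv_comp_comp_mul_const (by rw [ht₁, hhom]; exact hEdiff) (by rw [ht₁]; exact hψp t₁),
      ht₁, hhom, apply_eq_smul_areaForm (w := w) (hEx t₂) (hEy t₂)]
    ring
  rw [deriv_fst_comp (hψp t₁), deriv_snd_comp (hψp t₁), hΘ]
  constructor
  · rfl
  · rw [← mul_neg, ← areaForm_swap, mul_div_cancel_left₀ _ (pow_ne_zero 2 hL)]
    rfl

/-- **The homoclinic invariant as the derivative of the splitting function.**
If `E` vanishes on the unstable separatrix `ψ⁻` and `∇E(ψ⁻) = −(log λ)·J·ψ̇⁻`, then for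
the splitting function `Θ(T) = E(ψ⁺(T log λ))` and a homoclinic point
`ψ⁺(t₁) = ψ⁻(t₂)`, `T₁ = t₁/log λ`, one has
`Θ′(T₁) = (log λ)²·(ψ̇⁻₁(t₂)ψ̇⁺₂(t₁) − ψ̇⁻₂(t₂)ψ̇⁺₁(t₁))`, and the homoclinic invariant
`ω = Ω(ψ̇⁺(t₁), ψ̇⁻(t₂))` equals `−Θ′(T₁)/(log λ)²`. -/
theorem stmt_17 (lam : ℝ) (hlam : 1 < lam) (U : Set (ℝ × ℝ)) (hU : IsOpen U)
    (E : ℝ × ℝ → ℝ) (hE : ContDiffOn ℝ 1 E U)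
    (ψm ψp : ℝ → ℝ × ℝ)
    (hψmU : ∀ t, ψm t ∈ U) (hψpU : ∀ t, ψp t ∈ U)
    (hψm : ∀ t, DifferentiableAt ℝ ψm t) (hψp : ∀ t, DifferentiableAt ℝ ψp t)
    (hE0 : ∀ t, E (ψm t) = 0)
    (hEx : ∀ t, fderiv ℝ E (ψm t) (1, 0) =
      -(Real.log lam) * deriv (fun s => (ψm s).2) t)
    (hEy : ∀ t, fderiv ℝ E (ψm t) (0, 1) =
      Real.log lam * deriv (fun s => (ψm s).1) t)
    (t₁ t₂ : ℝ) (hhom : ψp t₁ = ψm t₂) :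
    deriv (fun T => E (ψp (T * Real.log lam))) (t₁ / Real.log lam) =
      Real.log lam ^ 2 *
        (deriv (fun s => (ψm s).1) t₂ * deriv (fun s => (ψp s).2) t₁ -
         deriv (fun s => (ψm s).2) t₂ * deriv (fun s => (ψp s).1) t₁) ∧
    deriv (fun s => (ψp s).1) t₁ * deriv (fun s => (ψm s).2) t₂ -
      deriv (fun s => (ψp s).2) t₁ * deriv (fun s => (ψm s).1) t₂ =
      -(deriv (fun T => E (ψp (T * Real.log lam))) (t₁ / Real.log lam)) /
        Real.log lam ^ 2 :=
  stmt_17_general lam hlam U hU E hE ψm ψp hψmU hψp hEx hEy t₁ t₂ hhom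
end
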